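/- Let E be an arbitrary (countable) graph, K a field, and u ∈ E^0 a vertex such that there exists a closed path based at u (a path μ with s(μ) = r(μ) = u of positive length). Then the principal left ideal L_K(E)u is not a minimal left ideal. -/

import Mathlib

set_option synthInstance.maxHeartbeats 1000000
set_option maxHeartbeats 1000000

noncomputable section

/-! ## Generators and relations for the Leavitt path algebra of a graph

A (directed) graph is given by types `V` (vertices, `E^0`) and `Ed` (edges, `E^1`),
both countable, together with source and range maps `s r : Ed → V`. -/

/-- Generators for the Leavitt path algebra: vertices, real edges and ghost edges. -/
inductive LPAGen (V Ed : Type) : Type where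
  | vert : V → LPAGen V Ed
  | edge : Ed → LPAGen V Ed
  | ghost : Ed → LPAGen V Ed

open Classical in
/-- The defining relations of the Leavitt path algebra: the vertices are pairwise
orthogonal idempotents, (1) `s(e)e = e = e r(e)`, (2) `r(e)e* = e* = e* s(e)`,
(3) `e* e' = δ_{e,e'} r(e)`, and (4) `v = ∑_{s(e) = v} e e*` for every regular vertex `v`. -/
inductive LPARel (K : Type) [Field K] {V Ed : Type} (s r : Ed → V) :
    FreeAlgebra K (LPAGen V Ed) → FreeAlgebra K (LPAGen V Ed) → Prop where
  | vert_mul (u v : V) : LPARel K s r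
      (FreeAlgebra.ι K (LPAGen.vert u) * FreeAlgebra.ι K (LPAGen.vert v))
      (if u = v then FreeAlgebra.ι K (LPAGen.vert u) else 0)
  | src_mul_edge (e : Ed) : LPARel K s r
      (FreeAlgebra.ι K (LPAGen.vert (s e)) * FreeAlgebra.ι K (LPAGen.edge e))
      (FreeAlgebra.ι K (LPAGen.edge e))
  | edge_mul_rng (e : Ed) : LPARel K s r
      (FreeAlgebra.ι K (LPAGen.edge e) * FreeAlgebra.ι K (LPAGen.vert (r e)))
      (FreeAlgebra.ι K (LPAGen.edge e))
  | rng_mul_ghost (e : Ed) : LPARel K s r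
      (FreeAlgebra.ι K (LPAGen.vert (r e)) * FreeAlgebra.ι K (LPAGen.ghost e))
      (FreeAlgebra.ι K (LPAGen.ghost e))
  | ghost_mul_src (e : Ed) : LPARel K s r
      (FreeAlgebra.ι K (LPAGen.ghost e) * FreeAlgebra.ι K (LPAGen.vert (s e)))
      (FreeAlgebra.ι K (LPAGen.ghost e))
  | ghost_mul_edge (e f : Ed) : LPARel K s r
      (FreeAlgebra.ι K (LPAGen.ghost e) * FreeAlgebra.ι K (LPAGen.edge f))
      (if e = f then FreeAlgebra.ι K (LPAGen.vert (r e)) else 0)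
  | ck2 (v : V) (h : {e : Ed | s e = v}.Finite) (hne : {e : Ed | s e = v}.Nonempty) :
      LPARel K s r
        (∑ e ∈ h.toFinset,
          FreeAlgebra.ι K (LPAGen.edge e) * FreeAlgebra.ι K (LPAGen.ghost e))
        (FreeAlgebra.ι K (LPAGen.vert v))

variable (K : Type) [Field K] {V Ed : Type} (s r : Ed → V)

/-- The ambient unital algebra: quotient of the free associative algebra on the
generators by the ideal induced by the Leavitt path algebra relations. -/
abbrev LPAamb : Type := RingQuot (LPARel K s r)

/-- The canonical image of a generator in the ambient algebra. -/
def lpaGen (g : LPAGen V Ed) : LPAamb K s r :=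
  RingQuot.mkAlgHom K (LPARel K s r) (FreeAlgebra.ι K g)

/-- The Leavitt path algebra `L_K(E)` of the graph `E = (V, Ed, s, r)`: the (in general
non-unital) subalgebra of the ambient quotient algebra generated by the vertices,
edges and ghost edges. -/
def LeavittPathAlgebra : NonUnitalSubalgebra K (LPAamb K s r) :=
  NonUnitalAlgebra.adjoin K (Set.range (lpaGen K s r))

namespace LPA

/-- A vertex, as an element of the Leavitt path algebra. -/
def vertex (v : V) : LeavittPathAlgebra K s r :=
  ⟨lpaGen K s r (LPAGen.vert v), NonUnitalAlgebra.subset_adjoin K ⟨_, rfl⟩⟩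

/-- A (real) edge, as an element of the Leavitt path algebra. -/
def edge (e : Ed) : LeavittPathAlgebra K s r :=
  ⟨lpaGen K s r (LPAGen.edge e), NonUnitalAlgebra.subset_adjoin K ⟨_, rfl⟩⟩

/-- A ghost edge `e*`, as an element of the Leavitt path algebra. -/
def ghost (e : Ed) : LeavittPathAlgebra K s r :=
  ⟨lpaGen K s r (LPAGen.ghost e), NonUnitalAlgebra.subset_adjoin K ⟨_, rfl⟩⟩

/-- The set of elements of the Leavitt path algebra of the form `v`, `e` or `e*`
(i.e. the set `E^0 ∪ E^1 ∪ (E^1)^*`). -/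
def genSet : Set (LeavittPathAlgebra K s r) :=
  {x | ∃ g : LPAGen V Ed, (x : LPAamb K s r) = lpaGen K s r g}

end LPA

/-! ## Graph-theoretic notions -/

section GraphNotions

/-- `Reaches s r u w` : there is a (possibly trivial) path from `u` to `w`,
that is, `w ∈ T(u)`, the tree of `u`. -/
def Reaches (u w : V) : Prop :=
  Relation.ReflTransGen (fun a b => ∃ e : Ed, s e = a ∧ r e = b) u w

/-- A vertex `v` is a bifurcation if it emits at least two distinct edges. -/
def IsBifurcation (v : V) : Prop := ∃ e f : Ed, e ≠ f ∧ s e = v ∧ s f = v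

/-- `v` is a regular vertex: neither a sink nor an infinite emitter. -/
def IsRegularVertex (v : V) : Prop :=
  {e : Ed | s e = v}.Finite ∧ {e : Ed | s e = v}.Nonempty

/-- A nonempty list of edges is a closed path based at `v` if consecutive edges are
composable, its source is `v` and its range is `v`. -/
structure IsClosedPath (es : List Ed) (v : V) : Prop where
  ne : es ≠ []
  chain : es.Chain' fun e f => r e = s f
  src : s (es.head ne) = v
  rng : r (es.getLast ne) = v

/-- A cycle based at `v` : a closed path based at `v` whose edges have pairwise
distinct sources. -/
structure IsCycle (es : List Ed) (v : V) extends IsClosedPath s r es v : Prop where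
  nodup : (es.map s).Nodup

/-- A path (list of edges) has an exit if some edge `g` shares its source with some
edge of the path but is distinct from it. -/
def HasExit (es : List Ed) : Prop := ∃ g : Ed, ∃ e ∈ es, s g = s e ∧ g ≠ e

/-- Condition (L): every cycle has an exit. -/
def ConditionL : Prop := ∀ (es : List Ed) (v : V), IsCycle s r es v → HasExit s es

/-- A line point: no vertex of the tree `T(u)` is a bifurcation or the base of a cycle. -/
def IsLinePoint (u : V) : Prop :=
  ∀ w : V, Reaches s r u w →
    ¬ IsBifurcation s w ∧ ∀ es : List Ed, ¬ IsCycle s r es w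

/-- A set `H` of vertices is hereditary if it is closed under ranges of paths. -/
def IsHereditary (H : Set V) : Prop := ∀ v ∈ H, ∀ w : V, Reaches s r v w → w ∈ H

/-- A set `H` of vertices is saturated if every regular vertex all of whose emitted
edges have range in `H` belongs to `H`. -/
def IsSaturated (H : Set V) : Prop :=
  ∀ v : V, IsRegularVertex s v → (∀ e : Ed, s e = v → r e ∈ H) → v ∈ H

end GraphNotions

/-! ## Ring-theoretic notions for (possibly non-unital) rings -/

section RingNotions

variable {R : Type} [NonUnitalNonAssocRing R]

/-- A left ideal of a (possibly non-unital) ring: an additive subgroup closed under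
left multiplication by arbitrary ring elements. -/
def IsLeftIdeal (I : AddSubgroup R) : Prop := ∀ a : R, ∀ x ∈ I, a * x ∈ I

/-- A two-sided ideal of a (possibly non-unital) ring. -/
def IsTwoSidedIdealSG (I : AddSubgroup R) : Prop :=
  ∀ a : R, ∀ x ∈ I, a * x ∈ I ∧ x * a ∈ I

/-- A minimal left ideal: a nonzero left ideal properly containing no nonzero
left ideal. -/
def IsMinimalLeftIdeal (I : AddSubgroup R) : Prop :=
  IsLeftIdeal I ∧ I ≠ ⊥ ∧ ∀ J : AddSubgroup R, IsLeftIdeal J → J < I → J = ⊥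

/-- The socle of a ring: the sum of all its minimal left ideals (the zero ideal if
there are none). -/
def rsocle (R : Type) [NonUnitalNonAssocRing R] : AddSubgroup R :=
  sSup {I : AddSubgroup R | IsMinimalLeftIdeal I}

/-- The two-sided ideal generated by a subset of a ring. -/
def idealGenBy (S : Set R) : AddSubgroup R :=
  sInf {I : AddSubgroup R | S ⊆ ↑I ∧ IsTwoSidedIdealSG I}

/-- A ring is semiprime if it has no nonzero two-sided ideal with zero square. -/
def IsSemiprimeRing (R : Type) [NonUnitalNonAssocRing R] : Prop :=
  ∀ I : AddSubgroup R, IsTwoSidedIdealSG I → (∀ x ∈ I, ∀ y ∈ I, x * y = 0) → I = ⊥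

/-- An idempotent ring: `R² = R`, i.e. every element is a sum of products. -/
def IsIdempotentRing (R : Type) [NonUnitalNonAssocRing R] : Prop :=
  ∀ x : R, x ∈ AddSubgroup.closure {y : R | ∃ a b : R, y = a * b}

/-- The principal left ideal `R·a = {x * a : x ∈ R}`. -/
def principalLeft (a : R) : AddSubgroup R where
  carrier := Set.range fun x : R => x * a
  add_mem' := by rintro _ _ ⟨x, rfl⟩ ⟨y, rfl⟩; exact ⟨x + y, add_mul x y a⟩
  zero_mem' := ⟨0, zero_mul a⟩
  neg_mem' := by rintro _ ⟨x, rfl⟩; exact ⟨-x, neg_mul x a⟩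

theorem principalLeft.mul_mem {R : Type} [NonUnitalRing R] (a b : R) {x : R}
    (hx : x ∈ principalLeft a) : b * x ∈ principalLeft a := by
  obtain ⟨y, rfl⟩ := hx
  exact ⟨b * y, by simp only []; rw [mul_assoc]⟩

end RingNotions

/-!
Suppose `L·u` is minimal and let `μ` be the closed path, of length `n > 0`. Since `u - μ` is a
nonzero element of `uLu`, the left ideal `L·(u - μ) ⊆ L·u` is all of `L·u`, so `u = x(u - μ)`.
Applying the gauge coaction turns this into `z (u - μ tⁿ) = u` in `L[t, t⁻¹]`. The elements
`d_j = z_{jn} u` satisfy `d_0 = u + d_{-1} μ` and `d_j = d_{j-1} μ` for `j ≠ 0`; as only finitely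
many are nonzero, `d_{-1} = 0` and `d_k = μ^k` for `k ≥ 1`, so `μ` is nilpotent. This contradicts
`(μ*)^k μ^k = u ≠ 0`. That `u ≠ μ` also follows from the grading, as the two have different
degrees.
-/

section MinimalLeftIdeal

variable {R : Type} [NonUnitalRing R]

theorem ne_zero_of_isMinimalLeftIdeal_principalLeft {e : R}
    (h : IsMinimalLeftIdeal (principalLeft e)) : e ≠ 0 := by
  rintro rfl
  refine h.2.1 ((AddSubgroup.eq_bot_iff_forall _).2 ?_)
  rintro _ ⟨x, rfl⟩
  exact mul_zero x

theorem not_isMinimalLeftIdeal_principalLeft {e a : R} (he : e * e = e) (hea : e * a = a)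
    (hae : a * e = a) (ha : a ≠ 0) (he_mem : e ∉ principalLeft a) :
    ¬ IsMinimalLeftIdeal (principalLeft e) := by
  rintro ⟨-, -, hmin⟩
  have hle : principalLeft a ≤ principalLeft e := by
    rintro _ ⟨x, rfl⟩
    exact ⟨x * a, by simp only [mul_assoc, hae]⟩
  have hlt : principalLeft a < principalLeft e :=
    lt_of_le_of_ne hle fun heq => he_mem (heq ▸ ⟨e, he⟩)
  have hbot := hmin _ (fun b _ hx => principalLeft.mul_mem a b hx) hlt
  exact ha (AddSubgroup.mem_bot.1 (hbot ▸ ⟨e, hea⟩))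

end MinimalLeftIdeal

section Nilpotent

variable {A : Type*} [Ring A] {u p : A}

theorem not_isNilpotent_of_mul_eq {q : A} (hqp : q * p = u) (hup : u * p = p) (hu : u ≠ 0) :
    ¬ IsNilpotent p := by
  have hpow : ∀ k : ℕ, q ^ (k + 1) * p ^ (k + 1) = u := by
    intro k
    induction k with
    | zero => simpa using hqp
    | succ k ih =>
      rw [pow_succ q, pow_succ' p, mul_assoc, ← mul_assoc q, hqp, pow_succ' p k,
        ← mul_assoc u, hup, ← pow_succ', ih]
  rintro ⟨m, hm⟩
  rw [← hpow m, pow_succ p, hm, zero_mul, mul_zero] at hu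
  exact hu rfl

theorem isNilpotent_of_recurrence (hup : u * p = p) {d : ℤ → A}
    (hd : (Function.support d).Finite) (h0 : d 0 = u + d (-1) * p)
    (hrec : ∀ j ≠ 0, d j = d (j - 1) * p) : IsNilpotent p := by
  obtain ⟨M, hM⟩ := hd.bddAbove
  obtain ⟨L, hL⟩ := hd.bddBelow
  have hdown : ∀ k : ℕ, d (-1) = d (-1 - k) * p ^ k := by
    intro k
    induction k with
    | zero => simp
    | succ k ih =>
      rw [ih, hrec _ (by omega), pow_succ', mul_assoc, Nat.cast_succ, sub_add_eq_sub_sub]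
  have hzero : ∀ j, j < L ∨ M < j → d j = 0 := fun j hj =>
    Function.notMem_support.1 fun h => by have := hL h; have := hM h; omega
  have hneg : d (-1) = 0 := by
    rw [hdown (-L).toNat, hzero _ (by omega), zero_mul]
  have hpos : ∀ k : ℕ, d (k + 1) = p ^ (k + 1) := by
    intro k
    induction k with
    | zero => simp [hrec 1 one_ne_zero, h0, hneg, hup]
    | succ k ih =>
      rw [hrec _ (by omega), pow_succ, ← ih]
      push_cast
      ring_nf
  refine ⟨M.toNat + 1, ?_⟩
  rw [← hpos, hzero _ (by omega)]

theorem AddMonoidAlgebra.isNilpotent_of_mul_sub_single_eq (hup : u * p = p) {n : ℤ}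
    (hn : n ≠ 0) {z : AddMonoidAlgebra A ℤ}
    (hz : z * (single 0 u - single n p) = single 0 u) : IsNilpotent p := by
  have hcoeff : ∀ m : ℤ, z.coeff m * u - z.coeff (m - n) * u * p = if m = 0 then u else 0 := by
    intro m
    have := congrArg (fun w => w.coeff m) hz
    simp only [mul_sub, coeff_sub, Finsupp.sub_apply, coeff_mul_single_apply, coeff_single,
      Finsupp.single_apply, neg_zero, add_zero, ← sub_eq_add_neg, @eq_comm ℤ 0] at this
    rw [mul_assoc, hup, this]
  refine isNilpotent_of_recurrence (d := fun j => z.coeff (j * n) * u) hup ?_ ?_ ?_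
  · refine (z.coeff.support.finite_toSet.preimage (mul_left_injective₀ hn).injOn).subset ?_
    intro j hj
    exact Finsupp.mem_support_iff.2 fun h => hj (by simp [h])
  · have := hcoeff 0
    simp only [zero_mul, neg_one_mul, zero_sub, ↓reduceIte] at this ⊢
    exact sub_eq_iff_eq_add.1 this
  · intro j hj
    have := hcoeff (j * n)
    rw [if_neg (mul_ne_zero hj hn), sub_eq_zero] at this
    simp only [this, sub_mul, one_mul]

end Nilpotent

namespace LPA

theorem vert_mul_self (v : V) :
    lpaGen K s r (.vert v) * lpaGen K s r (.vert v) = lpaGen K s r (.vert v) := by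
  simpa [lpaGen] using RingQuot.mkAlgHom_rel K (LPARel.vert_mul (K := K) (s := s) (r := r) v v)

theorem vert_src_mul_edge (e : Ed) :
    lpaGen K s r (.vert (s e)) * lpaGen K s r (.edge e) = lpaGen K s r (.edge e) := by
  simpa [lpaGen] using RingQuot.mkAlgHom_rel K (LPARel.src_mul_edge (K := K) (s := s) (r := r) e)

theorem edge_mul_vert_rng (e : Ed) :
    lpaGen K s r (.edge e) * lpaGen K s r (.vert (r e)) = lpaGen K s r (.edge e) := by
  simpa [lpaGen] using RingQuot.mkAlgHom_rel K (LPARel.edge_mul_rng (K := K) (s := s) (r := r) e)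

theorem ghost_mul_edge_self (e : Ed) :
    lpaGen K s r (.ghost e) * lpaGen K s r (.edge e) = lpaGen K s r (.vert (r e)) := by
  simpa [lpaGen] using
    RingQuot.mkAlgHom_rel K (LPARel.ghost_mul_edge (K := K) (s := s) (r := r) e e)

def genDeg : LPAGen V Ed → ℤ
  | .vert _ => 0
  | .edge _ => 1
  | .ghost _ => -1

def gaugeFree : FreeAlgebra K (LPAGen V Ed) →ₐ[K] AddMonoidAlgebra (LPAamb K s r) ℤ :=
  FreeAlgebra.lift K fun g => .single (genDeg g) (lpaGen K s r g)

def IsHomogeneous (d : ℤ) (x : FreeAlgebra K (LPAGen V Ed)) : Prop :=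
  gaugeFree K s r x = .single d (RingQuot.mkAlgHom K (LPARel K s r) x)

section Homogeneous

variable {K s r}

theorem isHomogeneous_ι (g : LPAGen V Ed) :
    IsHomogeneous K s r (genDeg g) (FreeAlgebra.ι K g) := by
  simp [IsHomogeneous, gaugeFree, lpaGen]

theorem isHomogeneous_zero (d : ℤ) : IsHomogeneous K s r d 0 := by
  simp [IsHomogeneous]

theorem IsHomogeneous.mul {d d' : ℤ} {x y : FreeAlgebra K (LPAGen V Ed)}
    (hx : IsHomogeneous K s r d x) (hy : IsHomogeneous K s r d' y) :
    IsHomogeneous K s r (d + d') (x * y) := by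
  rw [IsHomogeneous, map_mul, map_mul, hx, hy, AddMonoidAlgebra.single_mul_single]

theorem IsHomogeneous.ite {d : ℤ} {x : FreeAlgebra K (LPAGen V Ed)}
    (hx : IsHomogeneous K s r d x) (c : Prop) [Decidable c] :
    IsHomogeneous K s r d (if c then x else 0) := by
  split_ifs
  exacts [hx, isHomogeneous_zero d]

theorem IsHomogeneous.sum {ι : Type*} {d : ℤ} (t : Finset ι)
    {x : ι → FreeAlgebra K (LPAGen V Ed)} (hx : ∀ i ∈ t, IsHomogeneous K s r d (x i)) :
    IsHomogeneous K s r d (∑ i ∈ t, x i) := by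
  rw [IsHomogeneous, map_sum, map_sum, Finset.sum_congr rfl hx]
  exact (map_sum (AddMonoidAlgebra.singleAddHom d) _ _).symm

theorem _root_.LPARel.exists_isHomogeneous {a b : FreeAlgebra K (LPAGen V Ed)}
    (h : LPARel K s r a b) :
    ∃ d, IsHomogeneous K s r d a ∧ IsHomogeneous K s r d b := by
  classical
  have hι := isHomogeneous_ι (K := K) (s := s) (r := r)
  cases h with
  | vert_mul u v => exact ⟨0, (hι _).mul (hι _), (hι _).ite _⟩
  | src_mul_edge e => exact ⟨1, (hι _).mul (hι _), hι _⟩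
  | edge_mul_rng e => exact ⟨1, (hι _).mul (hι _), hι _⟩
  | rng_mul_ghost e => exact ⟨_, (hι _).mul (hι _), by simpa [genDeg] using hι (.ghost e)⟩
  | ghost_mul_src e => exact ⟨_, (hι _).mul (hι _), by simpa [genDeg] using hι (.ghost e)⟩
  | ghost_mul_edge e f => exact ⟨0, (hι _).mul (hι _), (hι _).ite _⟩
  | ck2 v _ _ => exact ⟨0, IsHomogeneous.sum _ fun e _ => (hι _).mul (hι _), hι _⟩

end Homogeneous

/-- The gauge coaction `g ↦ g t^(deg g)` into Laurent polynomials `L[t, t⁻¹]`, which encodes the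
`ℤ`-grading of `L`. -/
def gauge : LPAamb K s r →ₐ[K] AddMonoidAlgebra (LPAamb K s r) ℤ :=
  RingQuot.liftAlgHom K ⟨gaugeFree K s r, fun _ _ h => by
    obtain ⟨d, ha, hb⟩ := h.exists_isHomogeneous
    rw [ha, hb, RingQuot.mkAlgHom_rel K h]⟩

theorem gauge_lpaGen (g : LPAGen V Ed) :
    gauge K s r (lpaGen K s r g) = .single (genDeg g) (lpaGen K s r g) := by
  simp [gauge, lpaGen, gaugeFree]

def pathElem (es : List Ed) : LPAamb K s r := (es.map fun e => lpaGen K s r (.edge e)).prod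

def ghostPathElem (es : List Ed) : LPAamb K s r :=
  (es.reverse.map fun e => lpaGen K s r (.ghost e)).prod

theorem pathElem_cons (e : Ed) (es : List Ed) :
    pathElem K s r (e :: es) = lpaGen K s r (.edge e) * pathElem K s r es := by
  simp [pathElem]

theorem ghostPathElem_cons (e : Ed) (es : List Ed) :
    ghostPathElem K s r (e :: es) = ghostPathElem K s r es * lpaGen K s r (.ghost e) := by
  simp [ghostPathElem]

theorem vert_mul_pathElem_cons (e : Ed) (es : List Ed) :
    lpaGen K s r (.vert (s e)) * pathElem K s r (e :: es) = pathElem K s r (e :: es) := by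
  rw [pathElem_cons, ← mul_assoc, vert_src_mul_edge]

theorem pathElem_mul_vert_getLast (es : List Ed) (hne : es ≠ []) :
    pathElem K s r es * lpaGen K s r (.vert (r (es.getLast hne))) = pathElem K s r es := by
  conv => enter [1, 1]; rw [← List.dropLast_append_getLast hne]
  conv => enter [2]; rw [← List.dropLast_append_getLast hne]
  simp only [pathElem, List.map_append, List.prod_append, List.map_singleton, List.prod_singleton,
    mul_assoc, edge_mul_vert_rng]

theorem ghostPathElem_mul_pathElem : ∀ (es : List Ed) (hne : es ≠ []),
    es.IsChain (fun e f => r e = s f) →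
    ghostPathElem K s r es * pathElem K s r es = lpaGen K s r (.vert (r (es.getLast hne)))
  | [e], _, _ => by
    simp [ghostPathElem, pathElem, ghost_mul_edge_self]
  | e :: f :: es, _, hchain => by
    obtain ⟨hef, hchain⟩ := List.isChain_cons_cons.1 hchain
    rw [ghostPathElem_cons, pathElem_cons, mul_assoc, ← mul_assoc (lpaGen K s r (.ghost e)),
      ghost_mul_edge_self, hef, vert_mul_pathElem_cons, List.getLast_cons (List.cons_ne_nil f es),
      ghostPathElem_mul_pathElem (f :: es) (List.cons_ne_nil f es) hchain]

theorem pathElem_mem : ∀ es : List Ed, es ≠ [] → pathElem K s r es ∈ LeavittPathAlgebra K s r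
  | [e], _ => by
    rw [pathElem_cons, pathElem, List.map_nil, List.prod_nil, mul_one]
    exact (edge K s r e).2
  | e :: f :: es, _ => by
    rw [pathElem_cons]
    exact mul_mem (edge K s r e).2 (pathElem_mem (f :: es) (List.cons_ne_nil f es))

theorem gauge_pathElem (es : List Ed) :
    gauge K s r (pathElem K s r es) = .single (es.length : ℤ) (pathElem K s r es) := by
  induction es with
  | nil =>
    rw [pathElem, List.map_nil, List.prod_nil, map_one, List.length_nil, Nat.cast_zero]
    exact AddMonoidAlgebra.one_def
  | cons e es ih =>
    rw [pathElem_cons, map_mul, gauge_lpaGen, ih, AddMonoidAlgebra.single_mul_single,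
      List.length_cons, Nat.cast_succ, add_comm]
    rfl

end LPA

namespace IsClosedPath

open LPA

variable {s r} {es : List Ed} {u : V}

theorem vert_mul_pathElem (h : IsClosedPath s r es u) :
    lpaGen K s r (.vert u) * pathElem K s r es = pathElem K s r es := by
  obtain ⟨e, t, rfl⟩ := List.exists_cons_of_ne_nil h.ne
  have hsrc : s e = u := h.src
  rw [← hsrc, vert_mul_pathElem_cons]

theorem pathElem_mul_vert (h : IsClosedPath s r es u) :
    pathElem K s r es * lpaGen K s r (.vert u) = pathElem K s r es := by
  simpa only [h.rng] using pathElem_mul_vert_getLast K s r es h.ne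

theorem ghostPathElem_mul_pathElem (h : IsClosedPath s r es u) :
    ghostPathElem K s r es * pathElem K s r es = lpaGen K s r (.vert u) := by
  simpa only [h.rng] using LPA.ghostPathElem_mul_pathElem K s r es h.ne h.chain

theorem vert_ne_pathElem (h : IsClosedPath s r es u) (hu : lpaGen K s r (.vert u) ≠ 0) :
    lpaGen K s r (.vert u) ≠ pathElem K s r es := by
  intro heq
  have hgauge := congrArg (gauge K s r) heq
  rw [gauge_lpaGen, gauge_pathElem, ← heq, AddMonoidAlgebra.single_inj] at hgauge
  rcases hgauge with ⟨hlen, -⟩ | ⟨h0, -⟩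
  · have hlen' : (es.length : ℤ) = 0 := hlen.symm
    exact h.ne (List.length_eq_zero_iff.1 (by exact_mod_cast hlen'))
  · exact hu h0

theorem mul_sub_pathElem_ne (h : IsClosedPath s r es u) (hu : lpaGen K s r (.vert u) ≠ 0)
    (x : LPAamb K s r) :
    x * (lpaGen K s r (.vert u) - pathElem K s r es) ≠ lpaGen K s r (.vert u) := by
  intro hx
  have hz := congrArg (gauge K s r) hx
  rw [map_mul, map_sub, gauge_lpaGen, gauge_pathElem] at hz
  have hlen : (es.length : ℤ) ≠ 0 := by simpa using h.ne
  exact not_isNilpotent_of_mul_eq (h.ghostPathElem_mul_pathElem K) (h.vert_mul_pathElem K) hu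
    (AddMonoidAlgebra.isNilpotent_of_mul_sub_single_eq (h.vert_mul_pathElem K) hlen hz)

end IsClosedPath

theorem closed_path_not_minimal_general
    {V Ed : Type} (s r : Ed → V) (K : Type) [Field K]
    (u : V) (es : List Ed) (h : IsClosedPath s r es u) :
    ¬ IsMinimalLeftIdeal (principalLeft (LPA.vertex K s r u)) := by
  intro hmin
  have hu : lpaGen K s r (.vert u) ≠ 0 := fun h0 =>
    ne_zero_of_isMinimalLeftIdeal_principalLeft (R := LeavittPathAlgebra K s r) hmin
      (Subtype.ext h0)
  let p : LeavittPathAlgebra K s r := ⟨LPA.pathElem K s r es, LPA.pathElem_mem K s r es h.ne⟩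
  refine not_isMinimalLeftIdeal_principalLeft (R := LeavittPathAlgebra K s r)
    (a := LPA.vertex K s r u - p) ?_ ?_ ?_ ?_ ?_ hmin
  · exact Subtype.ext (LPA.vert_mul_self K s r u)
  · refine Subtype.ext (?_ : lpaGen K s r (.vert u) * (lpaGen K s r (.vert u) - p) = _)
    rw [mul_sub, LPA.vert_mul_self, h.vert_mul_pathElem K]
    rfl
  · refine Subtype.ext (?_ : (lpaGen K s r (.vert u) - p) * lpaGen K s r (.vert u) = _)
    rw [sub_mul, LPA.vert_mul_self, h.pathElem_mul_vert K]
    rfl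
  · exact sub_ne_zero.2 fun he : LPA.vertex K s r u = p =>
      h.vert_ne_pathElem K hu (congrArg Subtype.val he)
  · rintro ⟨x, hx⟩
    exact h.mul_sub_pathElem_ne K hu x (congrArg Subtype.val hx)

/-- If there is a closed path based at the vertex `u`, then the principal left ideal
`L_K(E)u` is not a minimal left ideal. -/
theorem closed_path_not_minimal
    {V Ed : Type} [Countable V] [Countable Ed] (s r : Ed → V) (K : Type) [Field K]
    (u : V) (es : List Ed) (h : IsClosedPath s r es u) :
    ¬ IsMinimalLeftIdeal (principalLeft (LPA.vertex K s r u)) :=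
  closed_path_not_minimal_general s r K u es h
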